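/- Let {x_k} be a normalized complete minimal system with biorthogonal {x_k*}, and let σ ⊆ ℕ be such that the mixed system {x_k}_{k∈σ} ∪ {x_k*}_{k∈σ^c} is complete. Then the map σ ↦ P_σ is continuous at σ: whenever σ^m → σ in the product topology on {0,1}^ℕ, the projections P_{σ^m} converge pointwise to P_σ. -/

import Mathlib

open Filter Topology

noncomputable section

variable {H : Type*} [NormedAddCommGroup H] [InnerProductSpace ℂ H] [CompleteSpace H]

/-- Closed linear span of a set of vectors. -/
def clSpan (s : Set H) : Submodule ℂ H := (Submodule.span ℂ s).topologicalClosure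

instance (s : Set H) : CompleteSpace (clSpan s) :=
  (Submodule.isClosed_topologicalClosure _).completeSpace_coe

/-- Orthogonal projection onto the closed linear span of `s`, as a map `H → H`. -/
def projS (s : Set H) : H →L[ℂ] H :=
  (clSpan s).subtypeL ∘L (clSpan s).orthogonalProjection

/-- The system `x` is complete: its closed linear span is all of `H`. -/
def IsCompleteSystem (x : ℕ → H) : Prop := clSpan (Set.range x) = ⊤

/-- The system `x` is minimal: no vector lies in the closed span of the others. -/
def IsMinimalSystem (x : ℕ → H) : Prop :=
  ∀ k, x k ∉ clSpan (x '' {j | j ≠ k})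

/-- `y` is biorthogonal to `x`. -/
def IsBiorthogonal (x y : ℕ → H) : Prop :=
  ∀ k j, (inner ℂ (x k) (y j) : ℂ) = if k = j then 1 else 0

/-! The set of vectors `v` with `P_{σᵐ} v → P_σ v` is a linear subspace, and it is closed because
all orthogonal projections are `1`-Lipschitz. It contains `x_k` for `k ∈ σ`, which `P_{σᵐ}`
eventually fixes, and `x_k*` for `k ∉ σ`, which `P_{σᵐ}` eventually annihilates by
biorthogonality. Completeness of the mixed system then makes this subspace all of `H`. -/

lemma projS_eq_starProjection (s : Set H) : projS s = (clSpan s).starProjection := rfl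

omit [CompleteSpace H] in
lemma subset_clSpan (s : Set H) : s ⊆ clSpan s :=
  Submodule.subset_span.trans (Submodule.span ℂ s).le_topologicalClosure

lemma projS_apply_of_mem {s : Set H} {v : H} (hv : v ∈ s) : projS s v = v :=
  Submodule.starProjection_eq_self_iff.2 (subset_clSpan s hv)

lemma projS_apply_eq_zero_of_forall_inner {s : Set H} {v : H}
    (hv : ∀ u ∈ s, inner ℂ u v = 0) : projS s v = 0 := by
  rw [projS_eq_starProjection, Submodule.starProjection_apply_eq_zero_iff, clSpan,
    Submodule.orthogonal_closure]
  exact (Submodule.isOrtho_span.2 fun u hu w hw => hw ▸ hv u hu).symm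
    (Submodule.subset_span rfl : v ∈ Submodule.span ℂ {v})

lemma lipschitzWith_projS (s : Set H) : LipschitzWith 1 (projS s) :=
  ContinuousLinearMap.lipschitzWith_of_opNorm_le (Submodule.starProjection_norm_le _)


theorem tendsto_apply_of_equicontinuous_of_dense_span {𝕜 E F ι : Type*} [NormedField 𝕜]
    [NormedAddCommGroup E] [NormedSpace 𝕜 E] [NormedAddCommGroup F] [NormedSpace 𝕜 F]
    {l : Filter ι} {T : ι → E →L[𝕜] F} {T₀ : E →L[𝕜] F}
    (hT : Equicontinuous fun i => (T i : E → F)) {s : Set E}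
    (hs : (Submodule.span 𝕜 s).topologicalClosure = ⊤)
    (h : ∀ u ∈ s, Tendsto (fun i => T i u) l (𝓝 (T₀ u))) (v : E) :
    Tendsto (fun i => T i v) l (𝓝 (T₀ v)) := by
  let S : Submodule 𝕜 E :=
    { carrier := {v | Tendsto (fun i => T i v) l (𝓝 (T₀ v))}
      add_mem' := fun {u w} hu hw => by simpa only [Set.mem_ofPred_eq, map_add] using hu.add hw
      zero_mem' := by simpa only [Set.mem_ofPred_eq, map_zero] using tendsto_const_nhds
      smul_mem' := fun c u hu => by simpa only [Set.mem_ofPred_eq, map_smul] using hu.const_smul c }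
  have hS : IsClosed (S : Set E) := hT.isClosed_setOfPred_tendsto T₀.continuous
  have : ⊤ ≤ S := hs ▸ Submodule.topologicalClosure_minimal _ (Submodule.span_le.2 h) hS
  exact this trivial

section System

variable {x y : ℕ → H}

lemma projS_image_apply_of_mem {τ : Set ℕ} {k : ℕ} (hk : k ∈ τ) : projS (x '' τ) (x k) = x k :=
  projS_apply_of_mem (Set.mem_image_of_mem x hk)

lemma projS_image_apply_of_notMem (hbi : IsBiorthogonal x y) {τ : Set ℕ} {k : ℕ} (hk : k ∉ τ) :
    projS (x '' τ) (y k) = 0 := by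
  refine projS_apply_eq_zero_of_forall_inner ?_
  rintro _ ⟨j, hj, rfl⟩
  simpa [ne_of_mem_of_not_mem hj hk] using hbi j k

theorem proj_map_continuous_at_of_mixed_complete_general
    (x y : ℕ → H)
    (hbi : IsBiorthogonal x y)
    (σ : Set ℕ) (hmix : clSpan (x '' σ ∪ y '' σᶜ) = ⊤)
    (σ' : ℕ → Set ℕ)
    (hconv : ∀ n : ℕ, ∃ M : ℕ, ∀ m ≥ M, ∀ k ≤ n, (k ∈ σ' m ↔ k ∈ σ)) :
    ∀ v : H, Tendsto (fun m => projS (x '' σ' m) v) atTop (𝓝 (projS (x '' σ) v)) := by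
  have hev : ∀ k, ∀ᶠ m in atTop, (k ∈ σ' m ↔ k ∈ σ) := fun k =>
    let ⟨M, hM⟩ := hconv k
    eventually_atTop.2 ⟨M, fun m hm => hM m hm k le_rfl⟩
  refine tendsto_apply_of_equicontinuous_of_dense_span
    (LipschitzWith.uniformEquicontinuous _ 1 fun m => lipschitzWith_projS _).equicontinuous hmix ?_
  rintro _ (⟨k, hk, rfl⟩ | ⟨k, hk, rfl⟩)
  · rw [projS_image_apply_of_mem hk]
    exact tendsto_const_nhds.congr'
      ((hev k).mono fun m hm => (projS_image_apply_of_mem (hm.2 hk)).symm)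
  · rw [projS_image_apply_of_notMem hbi hk]
    exact tendsto_const_nhds.congr'
      ((hev k).mono fun m hm => (projS_image_apply_of_notMem hbi (mt hm.1 hk)).symm)

/-- If the mixed system for `σ` is complete, then `σ ↦ P_σ` is continuous at `σ`:
whenever `σᵐ → σ` in the product topology (eventual agreement on each initial segment),
the projections `P_{σᵐ}` converge pointwise to `P_σ`. -/
theorem proj_map_continuous_at_of_mixed_complete [TopologicalSpace.SeparableSpace H]
    (x y : ℕ → H) (hc : IsCompleteSystem x) (hmin : IsMinimalSystem x)
    (hbi : IsBiorthogonal x y) (hnorm : ∀ k, ‖x k‖ = 1)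
    (σ : Set ℕ) (hmix : clSpan (x '' σ ∪ y '' σᶜ) = ⊤)
    (σ' : ℕ → Set ℕ)
    (hconv : ∀ n : ℕ, ∃ M : ℕ, ∀ m ≥ M, ∀ k ≤ n, (k ∈ σ' m ↔ k ∈ σ)) :
    ∀ v : H, Tendsto (fun m => projS (x '' σ' m) v) atTop (𝓝 (projS (x '' σ) v)) :=
  proj_map_continuous_at_of_mixed_complete_general x y hbi σ hmix σ' hconv
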